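/- arXiv:2402.16214 — 5 statements merged into one kernel-verified Lean document; each statement's English description precedes it below -/
import Mathlib

section
/- Let f be a strongly homogeneous polynomial of order type a in k[x_1,...,x_d] with f(𝟏) = 0. Then the principal symmetric ideal (f)_{S_d} is strictly contained in the ideal (R_a) generated by all monomials of order type a; in particular no monomial of order type a belongs to (f)_{S_d}. -/
open MvPolynomial

def symOrbit {k : Type*} [CommSemiring k] {d : ℕ} (f : MvPolynomial (Fin d) k) :
    Set (MvPolynomial (Fin d) k) :=
  Set.range (fun σ : Equiv.Perm (Fin d) => rename σ f)

noncomputable def psi {k : Type*} [CommSemiring k] {d : ℕ} (f : MvPolynomial (Fin d) k) :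
    Ideal (MvPolynomial (Fin d) k) :=
  Ideal.span (symOrbit f)

/-- The order type of an exponent vector: the multiset of its values. Two exponent vectors
have the same order type iff one is a permutation of the other. -/
def orderTypeF {d : ℕ} (s : Fin d → ℕ) : Multiset ℕ :=
  Multiset.map s Finset.univ.val

def orderType {d : ℕ} (s : Fin d →₀ ℕ) : Multiset ℕ :=
  orderTypeF (s : Fin d → ℕ)


/-!
Evaluation at `𝟏` is invariant under permuting the variables, so it kills every generator of
`(f)_{S_d}` and hence the whole ideal, while it sends every monomial to `1`. Permuting the
variables preserves order types, so `(f)_{S_d} ⊆ (R_a)`; and `x^a` lies in `(R_a)` but not in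
`(f)_{S_d}`.
-/

section OrderType

variable {d : ℕ}

theorem orderTypeF_comp_perm (s : Fin d → ℕ) (σ : Equiv.Perm (Fin d)) :
    orderTypeF (s ∘ σ) = orderTypeF s := by
  rw [orderTypeF, ← Multiset.map_map, Multiset.map_univ_val_equiv, orderTypeF]

theorem orderType_mapDomain_perm (σ : Equiv.Perm (Fin d)) (m : Fin d →₀ ℕ) :
    orderType (Finsupp.mapDomain σ m) = orderType m := by
  have hcoe : ⇑(Finsupp.mapDomain σ m) = m ∘ σ.symm :=
    funext fun i => Finsupp.mapDomain_equiv_apply m i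
  rw [orderType, hcoe, orderTypeF_comp_perm, orderType]

noncomputable def orderTypeIdeal (k : Type*) [CommSemiring k] (d : ℕ) (t : Multiset ℕ) :
    Ideal (MvPolynomial (Fin d) k) :=
  Ideal.span {p | ∃ s : Fin d →₀ ℕ, orderType s = t ∧ p = monomial s 1}

section CommSemiring

variable {k : Type*} [CommSemiring k]

theorem monomial_one_mem_orderTypeIdeal {t : Multiset ℕ} {s : Fin d →₀ ℕ}
    (hs : orderType s = t) : monomial s (1 : k) ∈ orderTypeIdeal k d t :=
  Ideal.subset_span ⟨s, hs, rfl⟩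

theorem mem_orderTypeIdeal_of_forall_mem_support {t : Multiset ℕ} {g : MvPolynomial (Fin d) k}
    (hg : ∀ m ∈ g.support, orderType m = t) : g ∈ orderTypeIdeal k d t := by
  have hset : {p : MvPolynomial (Fin d) k | ∃ s, orderType s = t ∧ p = monomial s 1} =
      (fun s => monomial s 1) '' {s | orderType s = t} := by
    ext p
    simp only [Set.mem_ofPred_eq, Set.mem_image, eq_comm]
  rw [orderTypeIdeal, hset]
  exact mem_ideal_span_monomial_image.mpr fun m hm => ⟨m, hg m hm, le_rfl⟩

theorem orderType_of_mem_support_rename_perm {t : Multiset ℕ} {f : MvPolynomial (Fin d) k}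
    (hf : ∀ m ∈ f.support, orderType m = t) (σ : Equiv.Perm (Fin d)) :
    ∀ m ∈ (rename σ f).support, orderType m = t := by
  classical
  rw [support_rename_of_injective σ.injective]
  simp only [Finset.mem_image]
  rintro _ ⟨m, hm, rfl⟩
  rw [orderType_mapDomain_perm, hf m hm]

theorem psi_le_orderTypeIdeal {t : Multiset ℕ} {f : MvPolynomial (Fin d) k}
    (hf : ∀ m ∈ f.support, orderType m = t) : psi f ≤ orderTypeIdeal k d t :=
  Ideal.span_le.mpr <| by
    rintro _ ⟨σ, rfl⟩
    exact mem_orderTypeIdeal_of_forall_mem_support (orderType_of_mem_support_rename_perm hf σ)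

theorem psi_le_ker_eval_const {f : MvPolynomial (Fin d) k} {c : k}
    (hf : eval (fun _ => c) f = 0) : psi f ≤ RingHom.ker (eval fun _ : Fin d => c) :=
  Ideal.span_le.mpr <| by
    rintro _ ⟨σ, rfl⟩
    exact (eval_rename _ _ _).trans hf

theorem monomial_one_notMem_psi [Nontrivial k] {f : MvPolynomial (Fin d) k}
    (hf : eval (fun _ => (1 : k)) f = 0) (s : Fin d →₀ ℕ) :
    monomial s (1 : k) ∉ psi f := fun hs => by
  simpa [eval_monomial] using psi_le_ker_eval_const hf hs

end CommSemiring

end OrderType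

theorem strongly_homogeneous_eval_one_zero_general {k : Type*} [Field k] {d : ℕ}
    (f : MvPolynomial (Fin d) k) (a : Fin d → ℕ)
    (hstr : ∀ m ∈ f.support, orderType m = orderTypeF a)
    (h1 : eval (fun _ => (1 : k)) f = 0) :
    psi f < Ideal.span {p : MvPolynomial (Fin d) k |
        ∃ s : Fin d →₀ ℕ, orderType s = orderTypeF a ∧ p = monomial s 1} ∧
      ∀ s : Fin d →₀ ℕ, orderType s = orderTypeF a → (monomial s 1 : MvPolynomial (Fin d) k) ∉ psi f := by
  have hxa : orderType (Finsupp.equivFunOnFinite.symm a) = orderTypeF a := rfl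
  refine ⟨SetLike.lt_iff_le_and_exists.mpr ⟨psi_le_orderTypeIdeal hstr, _,
    monomial_one_mem_orderTypeIdeal hxa, monomial_one_notMem_psi h1 _⟩,
    fun s _ => monomial_one_notMem_psi h1 s⟩

theorem strongly_homogeneous_eval_one_zero {k : Type*} [Field k] {d : ℕ}
    (f : MvPolynomial (Fin d) k) (a : Fin d → ℕ) (ha : Antitone a)
    (hstr : ∀ m ∈ f.support, orderType m = orderTypeF a)
    (h1 : eval (fun _ => (1 : k)) f = 0) :
    psi f < Ideal.span {p : MvPolynomial (Fin d) k |
        ∃ s : Fin d →₀ ℕ, orderType s = orderTypeF a ∧ p = monomial s 1} ∧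
      ∀ s : Fin d →₀ ℕ, orderType s = orderTypeF a → (monomial s 1 : MvPolynomial (Fin d) k) ∉ psi f :=
  strongly_homogeneous_eval_one_zero_general f a hstr h1
end

section
/- Let I = (f)_{S_d} be a principal symmetric ideal where f is homogeneous and not k-symmetric, and let J = (g_1,...,g_m) be a homogeneous ideal generated in a single degree. Then the minimal number of generators satisfies μ(IJ) ≥ μ(J) + 1. -/
open MvPolynomial

def kSymmetric {k : Type*} [CommSemiring k] {d : ℕ} (f : MvPolynomial (Fin d) k) : Prop :=
  ∀ σ : Equiv.Perm (Fin d), ∃ c : k, c ≠ 0 ∧ rename σ f = c • f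

/-- The minimal number of generators of an ideal. -/
noncomputable def mu {k : Type*} [CommSemiring k] {d : ℕ}
    (I : Ideal (MvPolynomial (Fin d) k)) : ℕ :=
  sInf {n : ℕ | ∃ S : Finset (MvPolynomial (Fin d) k),
    S.card = n ∧ Ideal.span (S : Set (MvPolynomial (Fin d) k)) = I}

/-!
Let `V` be the `k`-span of the `gs i` and `W` the `k`-span of the products `rename σ f * gs i`;
these products generate `psi f * J` and are forms of degree `n + e`. Then `mu J ≤ dim V`, and
`dim W ≤ mu (psi f * J)` because the degree-`(n + e)` components of any generating set of
`psi f * J` span `W`. Finally `dim V < dim W`: otherwise each `rename σ f • V ⊆ W` has full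
dimension, so `f • V = rename σ f • V`; comparing gcds of generators, `f` and `rename σ f` are
associated, i.e. differ by a nonzero scalar, for every `σ`, and `f` would be `k`-symmetric.
-/

namespace MvPolynomial

variable {σ R : Type*} [CommSemiring R]

attribute [local instance] MvPolynomial.gradedAlgebra in
theorem homogeneousComponent_mul_of_isHomogeneous {D : ℕ} {t : MvPolynomial σ R}
    (ht : t.IsHomogeneous D) (a : MvPolynomial σ R) :
    homogeneousComponent D (a * t) = C (constantCoeff a) * t := by
  have h := DirectSum.coe_decompose_mul_of_right_mem_of_le (𝒜 := homogeneousSubmodule σ R)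
    (a := a) ((mem_homogeneousSubmodule D t).2 ht) le_rfl
  rw [Nat.sub_self] at h
  erw [decomposition.decompose'_apply, decomposition.decompose'_apply] at h
  rwa [homogeneousComponent_zero] at h

theorem homogeneousComponent_mul_of_mem_span {D : ℕ} {T : Set (MvPolynomial σ R)}
    (hT : ∀ t ∈ T, t.IsHomogeneous D) {x : MvPolynomial σ R} (hx : x ∈ Ideal.span T)
    (a : MvPolynomial σ R) :
    homogeneousComponent D (a * x) = constantCoeff a • homogeneousComponent D x := by
  induction hx using Submodule.span_induction generalizing a with
  | mem t ht =>
    rw [homogeneousComponent_mul_of_isHomogeneous (hT t ht), homogeneousComponent_eq_self (hT t ht),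
      smul_eq_C_mul]
  | zero => simp
  | add x y _ _ hx hy => rw [mul_add, map_add, map_add, hx, hy, smul_add]
  | smul b x _ hx =>
    rw [smul_eq_mul, ← mul_assoc, hx, hx, map_mul, mul_smul]

end MvPolynomial

section Mu

variable {k : Type*} {d : ℕ}

theorem mu_le_card [CommSemiring k] {I : Ideal (MvPolynomial (Fin d) k)}
    {S : Finset (MvPolynomial (Fin d) k)} (hS : Ideal.span (S : Set _) = I) :
    mu I ≤ S.card :=
  Nat.sInf_le ⟨S, rfl, hS⟩

theorem exists_finset_card_eq_mu [CommRing k] [IsNoetherianRing k]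
    (I : Ideal (MvPolynomial (Fin d) k)) :
    ∃ S : Finset (MvPolynomial (Fin d) k), S.card = mu I ∧ Ideal.span (S : Set _) = I := by
  obtain ⟨S, hS⟩ := (IsNoetherian.noetherian I : I.FG)
  exact Nat.sInf_mem (s := {n | ∃ S : Finset _, S.card = n ∧ Ideal.span (S : Set _) = I})
    ⟨S.card, S, rfl, hS⟩

theorem mu_span_le_finrank [Field k] {s : Set (MvPolynomial (Fin d) k)} (hs : s.Finite) :
    mu (Ideal.span s) ≤ Module.finrank k (Submodule.span k s) := by
  obtain ⟨b, hbs, hspan, hb⟩ := exists_linearIndependent k s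
  have := (hs.subset hbs).fintype
  calc mu (Ideal.span s) ≤ b.toFinset.card := mu_le_card <| by
        rw [Set.coe_toFinset, ← Ideal.submodule_span_eq, ← Ideal.submodule_span_eq,
          ← Submodule.span_span_of_tower k, hspan, Submodule.span_span_of_tower]
    _ = Module.finrank k (Submodule.span k s) := by
        rw [← hspan, finrank_span_set_eq_card hb]

theorem finrank_span_le_mu_span [Field k] {D : ℕ} {T : Set (MvPolynomial (Fin d) k)}
    (hT : ∀ t ∈ T, t.IsHomogeneous D) :
    Module.finrank k (Submodule.span k T) ≤ mu (Ideal.span T) := by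
  classical
  obtain ⟨S, hcard, hS⟩ := exists_finset_card_eq_mu (Ideal.span T)
  set S' := S.image (homogeneousComponent D)
  have hle : Submodule.span k T ≤ Submodule.span k (S' : Set (MvPolynomial (Fin d) k)) := by
    refine Submodule.span_le.2 fun t ht => ?_
    have htS : t ∈ Submodule.span (MvPolynomial (Fin d) k) (S : Set _) := by
      rw [Ideal.submodule_span_eq, hS]; exact Ideal.subset_span ht
    obtain ⟨c, -, rfl⟩ := Submodule.mem_span_finset.1 htS
    rw [SetLike.mem_coe, ← homogeneousComponent_eq_self (hT _ ht), map_sum]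
    refine Submodule.sum_mem _ fun s hs => ?_
    have hsT : s ∈ Ideal.span T := hS ▸ Ideal.subset_span hs
    rw [smul_eq_mul, homogeneousComponent_mul_of_mem_span hT hsT]
    exact Submodule.smul_mem _ _ (Submodule.subset_span (Finset.mem_image_of_mem _ hs))
  calc Module.finrank k (Submodule.span k T)
      ≤ Module.finrank k (Submodule.span k (S' : Set (MvPolynomial (Fin d) k))) :=
        Submodule.finrank_mono hle
    _ ≤ S'.card := finrank_span_finset_le_card S'
    _ ≤ mu (Ideal.span T) := hcard ▸ Finset.card_image_le

end Mu

section Gcd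

variable {R ι : Type*} [CommRing R] [IsDomain R] [IsGCDMonoid R] [Fintype ι]

theorem dvd_of_span_mul_le_span_mul {g : ι → R} (hg : g ≠ 0) {p q : R}
    (h : Ideal.span (Set.range fun i => q * g i) ≤ Ideal.span (Set.range fun i => p * g i)) :
    p ∣ q := by
  obtain ⟨_⟩ : Nonempty (NormalizedGCDMonoid R) := inferInstance
  have hgcd : Finset.univ.gcd g ≠ 0 := fun h0 =>
    hg (funext fun i => Finset.gcd_eq_zero_iff.1 h0 i (Finset.mem_univ i))
  have hdvd : ∀ i, p * Finset.univ.gcd g ∣ q * g i := by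
    intro i
    rw [← Ideal.mem_span_singleton]
    refine h.trans (Ideal.span_le.2 ?_) (Ideal.subset_span ⟨i, rfl⟩)
    rintro _ ⟨j, rfl⟩
    exact Ideal.mem_span_singleton.2 (mul_dvd_mul_left p (Finset.gcd_dvd (Finset.mem_univ j)))
  have hpq : p * Finset.univ.gcd g ∣ q * Finset.univ.gcd g :=
    (Finset.dvd_gcd fun i _ => hdvd i).trans (Finset.gcd_mul_left' _ _ q).dvd
  exact (mul_dvd_mul_iff_right hgcd).1 hpq

theorem finrank_span_lt_finrank_span_mul {k κ : Type*} [Field k] [Algebra k R] [Finite κ]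
    {a : κ → R} (ha : ∀ j, a j ≠ 0) {g : ι → R} (hg : g ≠ 0) {j₁ j₂ : κ}
    (h : ¬ Associated (a j₁) (a j₂)) :
    Module.finrank k (Submodule.span k (Set.range g)) <
      Module.finrank k (Submodule.span k (Set.range fun x : κ × ι => a x.1 * g x.2)) := by
  set W := Submodule.span k (Set.range fun x : κ × ι => a x.1 * g x.2)
  have : FiniteDimensional k W := FiniteDimensional.span_of_finite k (Set.finite_range _)
  by_contra! hle
  have hW : ∀ j, Submodule.span k (Set.range fun i => a j * g i) = W := by
    intro j
    have hmap : Submodule.span k (Set.range fun i => a j * g i) =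
        (Submodule.span k (Set.range g)).map (LinearMap.mulLeft k (a j)) := by
      rw [Submodule.map_span, ← Set.range_comp]; rfl
    have hinj : Function.Injective (LinearMap.mulLeft k (a j)) := mul_right_injective₀ (ha j)
    refine Submodule.eq_of_le_of_finrank_le ?_ ?_
    · exact Submodule.span_mono (Set.range_subset_iff.2 fun i => ⟨(j, i), rfl⟩)
    · rw [hmap, ← (Submodule.equivMapOfInjective _ hinj _).finrank_eq]
      exact hle
  have hideal : ∀ j j', Ideal.span (Set.range fun i => a j * g i) =
      Ideal.span (Set.range fun i => a j' * g i) := by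
    intro j j'
    rw [← Ideal.submodule_span_eq, ← Ideal.submodule_span_eq,
      ← Submodule.span_span_of_tower k, hW, ← hW j', Submodule.span_span_of_tower]
  exact h (associated_of_dvd_dvd (dvd_of_span_mul_le_span_mul hg (hideal j₂ j₁).le)
    (dvd_of_span_mul_le_span_mul hg (hideal j₁ j₂).le))

end Gcd

theorem kSymmetric_of_forall_associated {k : Type*} [CommRing k] [IsReduced k] [Nontrivial k]
    {d : ℕ} {f : MvPolynomial (Fin d) k}
    (h : ∀ σ : Equiv.Perm (Fin d), Associated f (rename σ f)) :
    kSymmetric f := by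
  intro σ
  obtain ⟨u, hu⟩ := h σ
  obtain ⟨c, hc, hcu⟩ := isUnit_iff_eq_C_of_isReduced.1 u.isUnit
  exact ⟨c, hc.ne_zero, by rw [← hu, hcu, smul_eq_C_mul, mul_comm]⟩

theorem psi_mul_span_range {k ι : Type*} [CommSemiring k] {d : ℕ} (f : MvPolynomial (Fin d) k)
    (g : ι → MvPolynomial (Fin d) k) :
    psi f * Ideal.span (Set.range g) =
      Ideal.span (Set.range fun x : Equiv.Perm (Fin d) × ι => rename x.1 f * g x.2) := by
  rw [psi, symOrbit, Ideal.span_mul_span', ← Set.image2_mul, Set.image2_range]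

theorem mu_product_ge {k : Type*} [Field k] {d n e m : ℕ}
    (f : MvPolynomial (Fin d) k) (hfhom : f.IsHomogeneous n) (hf : ¬ kSymmetric f)
    (gs : Fin m → MvPolynomial (Fin d) k) (hgs : ∀ i, (gs i).IsHomogeneous e)
    (J : Ideal (MvPolynomial (Fin d) k)) (hJ : J = Ideal.span (Set.range gs))
    (hJne : J ≠ ⊥) :
    mu (psi f * J) ≥ mu J + 1 := by
  subst hJ
  obtain ⟨σ, hσ⟩ : ∃ σ : Equiv.Perm (Fin d), ¬ Associated f (rename σ f) := by
    by_contra! h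
    exact hf (kSymmetric_of_forall_associated h)
  have hf0 : f ≠ 0 := by
    rintro rfl
    exact hσ (by simp)
  have hg : gs ≠ 0 := by
    rintro rfl
    exact hJne (Ideal.span_eq_bot.2 (by rintro _ ⟨i, rfl⟩; rfl))
  have hU : ∀ u ∈ Set.range fun x : Equiv.Perm (Fin d) × Fin m => rename x.1 f * gs x.2,
      u.IsHomogeneous (n + e) := by
    rintro _ ⟨⟨τ, i⟩, rfl⟩
    exact hfhom.rename_isHomogeneous.mul (hgs i)
  rw [psi_mul_span_range]
  calc mu (Ideal.span (Set.range gs)) + 1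
      ≤ Module.finrank k (Submodule.span k (Set.range gs)) + 1 :=
        Nat.add_le_add_right (mu_span_le_finrank (Set.finite_range gs)) 1
    _ ≤ Module.finrank k (Submodule.span k
          (Set.range fun x : Equiv.Perm (Fin d) × Fin m => rename x.1 f * gs x.2)) :=
        finrank_span_lt_finrank_span_mul (a := fun τ : Equiv.Perm (Fin d) => rename τ f)
          (j₁ := 1)
          (fun τ => (map_ne_zero_iff _ (rename_injective _ τ.injective)).2 hf0) hg
          (by simpa using hσ)
    _ ≤ _ := finrank_span_le_mu_span hU
end

section
/- Let a and b be partitions with d parts (weakly decreasing tuples in ℕ^d), neither of which is constant. Then there exists a permutation τ ∈ S_d such that the sorted rearrangement of a + τ·b differs from the sorted rearrangement of a + b; more precisely, if i is minimal with a_1 ≠ a_i and j ≥ i is minimal with b_1 ≠ b_j, then a + b has exactly i−1 entries equal to its maximum value a_1 + b_1, while a + (1 j)·b has exactly i−2 entries equal to a_1 + b_1. -/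
/-!
Since `a` and `b` are antitone, `a l + b (σ l)` reaches the maximum `a 0 + b 0` exactly when
`a l = a 0` and `b (σ l) = b 0`, i.e. when `l < i` and `σ l < j`. For `σ = id` these are the `i`
indices below `i`; the transposition `(0 j)` sends `0` to `j`, which loses exactly the index `0`.
Counting copies of `a 0 + b 0` then separates the two multisets of sums.
-/

open Finset

section FirstDrop

variable {ι α : Type*} [LinearOrder ι] [OrderBot ι] {a b : ι → α}

theorem Antitone.apply_eq_apply_bot_iff_lt [PartialOrder α] (ha : Antitone a) {i : ι}
    (hi : a i ≠ a ⊥) (hmin : ∀ l < i, a l = a ⊥) (l : ι) : a l = a ⊥ ↔ l < i := by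
  refine ⟨fun hl => ?_, hmin l⟩
  by_contra! hil
  exact hi (le_antisymm (ha bot_le) (hl.symm.trans_le (ha hil)))

theorem Antitone.add_apply_comp_eq_add_apply_bot_iff [AddCommMonoid α] [PartialOrder α]
    [IsOrderedCancelAddMonoid α] (ha : Antitone a) (hb : Antitone b) {i j : ι}
    (hi : a i ≠ a ⊥) (himin : ∀ l < i, a l = a ⊥) (hj : b j ≠ b ⊥) (hjmin : ∀ l < j, b l = b ⊥)
    (σ : ι → ι) (l : ι) : a l + b (σ l) = a ⊥ + b ⊥ ↔ l < i ∧ σ l < j := by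
  rw [add_eq_add_iff_eq_and_eq (ha bot_le) (hb bot_le), ha.apply_eq_apply_bot_iff_lt hi himin,
    hb.apply_eq_apply_bot_iff_lt hj hjmin]

end FirstDrop

theorem Fin.card_filter_lt_and_lt {n : ℕ} {i j : Fin n} (hij : i ≤ j) :
    #{l | l < i ∧ l < j} = i := by
  rw [← Fin.card_Iio i]
  congr 1
  ext l
  simpa using fun hl => hl.trans_le hij

theorem Fin.card_filter_lt_and_swap_zero_lt {n : ℕ} {i j : Fin (n + 1)} (hi : i ≠ 0)
    (hij : i ≤ j) : #{l | l < i ∧ Equiv.swap 0 j l < j} = i - 1 := by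
  have hfilter : ({l | l < i ∧ Equiv.swap 0 j l < j} : Finset _) = (Iio i).erase 0 := by
    ext l
    rcases eq_or_ne l 0 with rfl | hl0
    · simp
    · have hswap : l < i → Equiv.swap 0 j l = l := fun hli =>
        Equiv.swap_apply_of_ne_of_ne hl0 (hli.trans_le hij).ne
      simp only [mem_filter, mem_univ, true_and, mem_erase, mem_Iio, ne_eq, hl0, not_false_eq_true]
      exact ⟨And.left, fun hli => ⟨hli, (hswap hli).symm ▸ hli.trans_le hij⟩⟩
  rw [hfilter, card_erase_of_mem (by simpa using Fin.pos_of_ne_zero hi), Fin.card_Iio]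

theorem Finset.map_univ_val_ne_of_card_filter_ne {ι β : Type*} [Fintype ι] [DecidableEq β]
    {f g : ι → β} (c : β) (h : #{l | f l = c} ≠ #{l | g l = c}) :
    univ.val.map f ≠ univ.val.map g := by
  intro hfg
  have hcount := congrArg (Multiset.count c) hfg
  simp only [Multiset.count_map, ← Finset.filter_val, eq_comm (a := c)] at hcount
  exact h hcount

theorem sum_of_partitions_order_types_differ_general {d : ℕ} (a b : Fin (d + 1) → ℕ)
    (ha : Antitone a) (hb : Antitone b)
    (i j : Fin (d + 1))
    (hi : a i ≠ a 0) (himin : ∀ l, l < i → a l = a 0)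
    (hj : b j ≠ b 0) (hjmin : ∀ l, l < j → b l = b 0)
    (hij : i ≤ j) :
    (∃ τ : Equiv.Perm (Fin (d + 1)),
        Multiset.map (fun l => a l + b (τ l)) Finset.univ.val ≠
          Multiset.map (fun l => a l + b l) Finset.univ.val) ∧
      (Finset.univ.filter (fun l => a l + b l = a 0 + b 0)).card = (i : ℕ) ∧
      (Finset.univ.filter
          (fun l => a l + b (Equiv.swap 0 j l) = a 0 + b 0)).card = (i : ℕ) - 1 := by
  have hi0 : i ≠ 0 := by rintro rfl; exact hi rfl
  have hmax := ha.add_apply_comp_eq_add_apply_bot_iff hb hi himin hj hjmin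
  have hcard : #{l | a l + b l = a 0 + b 0} = (i : ℕ) :=
    (congrArg card (filter_congr fun l _ => hmax id l)).trans (Fin.card_filter_lt_and_lt hij)
  have hcard_swap : #{l | a l + b (Equiv.swap 0 j l) = a 0 + b 0} = (i : ℕ) - 1 :=
    (congrArg card (filter_congr fun l _ => hmax (Equiv.swap 0 j) l)).trans
      (Fin.card_filter_lt_and_swap_zero_lt hi0 hij)
  refine ⟨⟨Equiv.swap 0 j, map_univ_val_ne_of_card_filter_ne (a 0 + b 0) ?_⟩, hcard, hcard_swap⟩
  rw [hcard, hcard_swap]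
  have hi_val : (i : ℕ) ≠ 0 := Fin.val_ne_zero_iff.mpr hi0
  omega

theorem sum_of_partitions_order_types_differ {d : ℕ} (a b : Fin (d + 1) → ℕ)
    (ha : Antitone a) (hb : Antitone b)
    (hanc : ∃ l, a l ≠ a 0) (hbnc : ∃ l, b l ≠ b 0)
    (i j : Fin (d + 1))
    (hi : a i ≠ a 0) (himin : ∀ l, l < i → a l = a 0)
    (hj : b j ≠ b 0) (hjmin : ∀ l, l < j → b l = b 0)
    (hij : i ≤ j) :
    (∃ τ : Equiv.Perm (Fin (d + 1)),
        Multiset.map (fun l => a l + b (τ l)) Finset.univ.val ≠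
          Multiset.map (fun l => a l + b l) Finset.univ.val) ∧
      (Finset.univ.filter (fun l => a l + b l = a 0 + b 0)).card = (i : ℕ) ∧
      (Finset.univ.filter
          (fun l => a l + b (Equiv.swap 0 j l) = a 0 + b 0)).card = (i : ℕ) - 1 :=
  sum_of_partitions_order_types_differ_general a b ha hb i j hi himin hj hjmin hij
end

section
/- Let f, g ∈ k[x_1,...,x_d] and let Stab_f = {σ ∈ S_d : σ·f = c f for some nonzero c ∈ k} and Stab_g defined analogously. If S_d = Stab_f · Stab_g (every element of S_d is a product of an element of Stab_f and an element of Stab_g), then (f)_{S_d} · (g)_{S_d} = (fg)_{S_d}. -/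
open MvPolynomial

/-- The k-stabilizer of `f`: permutations sending `f` to a nonzero scalar multiple of itself. -/
def kStab {k : Type*} [CommSemiring k] {d : ℕ} (f : MvPolynomial (Fin d) k) :
    Set (Equiv.Perm (Fin d)) :=
  {σ | ∃ c : k, c ≠ 0 ∧ rename σ f = c • f}

/-!
The inclusion `(fg)_{S_d} ⊆ (f)_{S_d} (g)_{S_d}` holds because `σ(fg) = σf · σg`. Conversely,
the product ideal is generated by the products `σf · τg`. Factor `σ⁻¹τ = γδ` with `γ ∈ Stab_f`,
`δ ∈ Stab_g`: then `σγ` moves `f` to a multiple of `σf` and `g` to a multiple of `τg`, so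
`σf · τg` is a nonzero scalar multiple of `(σγ)(fg)`.
-/

theorem MvPolynomial.smul_mem_ideal_iff {k ι : Type*} [Field k] {I : Ideal (MvPolynomial ι k)}
    {c : k} (hc : c ≠ 0) {p : MvPolynomial ι k} : c • p ∈ I ↔ p ∈ I := by
  rw [smul_eq_C_mul]
  exact Ideal.unit_mul_mem_iff_mem I (hc.isUnit.map C)

section

variable {k : Type*} [CommSemiring k] {d : ℕ}

theorem rename_mem_psi (σ : Equiv.Perm (Fin d)) (f : MvPolynomial (Fin d) k) :
    rename σ f ∈ psi f :=
  Ideal.subset_span ⟨σ, rfl⟩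

theorem psi_mul_le (f g : MvPolynomial (Fin d) k) : psi (f * g) ≤ psi f * psi g := by
  rw [psi, Ideal.span_le]
  rintro _ ⟨σ, rfl⟩
  simp only [map_mul]
  exact Ideal.mul_mem_mul (rename_mem_psi σ f) (rename_mem_psi σ g)

theorem smul_rename_mul_rename {f g : MvPolynomial (Fin d) k} {γ δ : Equiv.Perm (Fin d)}
    {c c' : k} (hγ : rename γ f = c • f) (hδ : rename δ g = c' • g) (σ : Equiv.Perm (Fin d)) :
    c • (rename σ f * rename (σ * γ * δ) g) = c' • rename (σ * γ) (f * g) := by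
  simp only [map_mul, Equiv.Perm.coe_mul, ← rename_rename, hγ, hδ, map_smul]
  rw [mul_smul_comm, smul_mul_assoc, smul_smul, smul_smul, mul_comm]

end

theorem rename_mul_rename_mem_psi_mul {k : Type*} [Field k] {d : ℕ}
    {f g : MvPolynomial (Fin d) k} {σ τ : Equiv.Perm (Fin d)}
    (h : ∃ γ ∈ kStab f, ∃ δ ∈ kStab g, σ⁻¹ * τ = γ * δ) :
    rename σ f * rename τ g ∈ psi (f * g) := by
  obtain ⟨γ, ⟨c, hc, hγ⟩, δ, ⟨c', -, hδ⟩, hστ⟩ := h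
  obtain rfl : τ = σ * γ * δ := by rw [mul_assoc, ← hστ, mul_inv_cancel_left]
  rw [← smul_mem_ideal_iff hc, smul_rename_mul_rename hγ hδ]
  exact Submodule.smul_of_tower_mem _ c' (rename_mem_psi _ _)

theorem product_of_stabilizers {k : Type*} [Field k] {d : ℕ}
    (f g : MvPolynomial (Fin d) k)
    (hstab : ∀ σ : Equiv.Perm (Fin d), ∃ γ ∈ kStab f, ∃ δ ∈ kStab g, σ = γ * δ) :
    psi f * psi g = psi (f * g) := by
  refine le_antisymm ?_ (psi_mul_le f g)
  rw [psi, psi, Ideal.span_mul_span', Ideal.span_le]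
  rintro _ ⟨_, ⟨σ, rfl⟩, _, ⟨τ, rfl⟩, rfl⟩
  exact rename_mul_rename_mem_psi_mul (hstab (σ⁻¹ * τ))
end

section
/- Let f ∈ k[x_1,x_2] be a nonzero homogeneous polynomial of degree k, let σ = (1 2), let g = gcd(f, σ·f), and let ℓ = deg(f/g). Then the Hilbert function of the ideal I = (f, σ·f) satisfies H_I(n) = 2·H_R(n−k) − H_R(n−k−ℓ) for all integers n, where R = k[x_1,x_2] and H_R(i) = max(i+1, 0). -/
/-!
Write `f = g q` and `σ f = g r`. A factor of a nonzero homogeneous polynomial is homogeneous (its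
expansion `p(t x)` in `t` has equal degree and trailing degree), so `q` and `r` are homogeneous of
degree `ℓ`; they are coprime since `g` is the gcd. In degree `n = k + m` the ideal `I = (f, σ f)`
is the image of `R_m × R_m → R_n, (a, b) ↦ a f + b σ f`. Cancelling `g`, the kernel consists of the
syzygies `q a + r b = 0`, and coprimality forces `(a, b) = (-r c, q c)` with `c ∈ R_{m - ℓ}`.
Rank–nullity and `dim R_m = m + 1` give the formula.
-/

open MvPolynomial

lemma exists_eq_mul_of_mul_add_mul_eq_zero {R : Type*} [CommRing R] [IsDomain R]
    [DecompositionMonoid R] {q r a b : R} (hqr : IsRelPrime q r) (hq : q ≠ 0)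
    (h : q * a + r * b = 0) : ∃ c, a = -(r * c) ∧ b = q * c := by
  obtain ⟨c, rfl⟩ : q ∣ b := hqr.dvd_of_dvd_mul_left ⟨-a, by linear_combination h⟩
  exact ⟨c, mul_left_cancel₀ hq (by linear_combination h), rfl⟩

lemma isRelPrime_of_forall_dvd_mul_dvd {α : Type*} [CommMonoidWithZero α] [IsCancelMulZero α]
    {g q r : α} (hg : g ≠ 0) (h : ∀ d, d ∣ g * q → d ∣ g * r → d ∣ g) : IsRelPrime q r := by
  intro d hdq hdr
  obtain ⟨t, ht⟩ := h (g * d) (mul_dvd_mul_left g hdq) (mul_dvd_mul_left g hdr)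
  exact IsUnit.of_mul_eq_one t (mul_left_cancel₀ hg (by rw [← mul_assoc, ← ht, mul_one]))

namespace MvPolynomial

section Expansion

variable {σ R : Type*} [CommSemiring R]

noncomputable def homogeneousExpansion : MvPolynomial σ R →ₐ[R] Polynomial (MvPolynomial σ R) :=
  aeval fun i => Polynomial.C (X i) * Polynomial.X

lemma homogeneousExpansion_monomial (d : σ →₀ ℕ) (c : R) :
    homogeneousExpansion (monomial d c) = Polynomial.monomial d.degree (monomial d c) := by
  rw [homogeneousExpansion, aeval_monomial, Finsupp.prod]
  simp only [mul_pow, Finset.prod_mul_distrib, Finset.prod_pow_eq_pow_sum, ← Finsupp.degree_apply,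
    ← Polynomial.C_pow, ← map_prod, Polynomial.algebraMap_apply]
  rw [← Polynomial.C_mul_X_pow_eq_monomial, monomial_eq, Finsupp.prod]
  simp only [map_mul, algebraMap_eq, mul_assoc]

lemma coeff_homogeneousExpansion (p : MvPolynomial σ R) (j : ℕ) :
    (homogeneousExpansion p).coeff j = homogeneousComponent j p := by
  induction p using MvPolynomial.induction_on' with
  | monomial d c =>
    rw [homogeneousExpansion_monomial, Polynomial.coeff_monomial,
      homogeneousComponent_of_mem (isHomogeneous_monomial c rfl)]
    simp only [eq_comm]
  | add p q hp hq => simp [hp, hq]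

lemma homogeneousExpansion_of_isHomogeneous {p : MvPolynomial σ R} {m : ℕ}
    (hp : p.IsHomogeneous m) : homogeneousExpansion p = Polynomial.monomial m p := by
  ext j : 1
  rw [coeff_homogeneousExpansion, Polynomial.coeff_monomial, homogeneousComponent_of_mem hp]
  simp only [eq_comm]

lemma homogeneousExpansion_ne_zero {a : MvPolynomial σ R} (ha : a ≠ 0) :
    homogeneousExpansion a ≠ 0 := by
  refine fun h => ha ?_
  rw [← sum_homogeneousComponent a]
  exact Finset.sum_eq_zero fun i _ => by rw [← coeff_homogeneousExpansion, h, Polynomial.coeff_zero]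

lemma isHomogeneous_of_forall_ne_homogeneousComponent_eq_zero {p : MvPolynomial σ R} {j : ℕ}
    (h : ∀ i ≠ j, homogeneousComponent i p = 0) : p.IsHomogeneous j := by
  intro d hd
  by_contra hdj
  have := congrArg (coeff d) (h _ hdj)
  simp only [coeff_homogeneousComponent, coeff_zero, ite_eq_right_iff] at this
  exact hd (this (by rw [Finsupp.degree_eq_weight_one]; rfl))

lemma isHomogeneous_natDegree_homogeneousExpansion {p : MvPolynomial σ R}
    (h : (homogeneousExpansion p).natTrailingDegree = (homogeneousExpansion p).natDegree) :
    p.IsHomogeneous (homogeneousExpansion p).natDegree := by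
  refine isHomogeneous_of_forall_ne_homogeneousComponent_eq_zero fun i hi => ?_
  rw [← coeff_homogeneousExpansion]
  rcases hi.lt_or_gt with hlt | hgt
  · exact Polynomial.coeff_eq_zero_of_lt_natTrailingDegree (h ▸ hlt)
  · exact Polynomial.coeff_eq_zero_of_natDegree_lt hgt

end Expansion

section Factor

variable {σ R : Type*} [CommRing R] [IsDomain R] {a b : MvPolynomial σ R}

/-- In `R[t]` the degree and the trailing degree are both additive, so if the expansion of `a * b`
is a single power of `t`, so are the expansions of `a` and `b`. -/
theorem IsHomogeneous.exists_of_mul {m : ℕ} (ha : a ≠ 0) (hb : b ≠ 0)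
    (h : (a * b).IsHomogeneous m) :
    ∃ i j, i + j = m ∧ a.IsHomogeneous i ∧ b.IsHomogeneous j := by
  classical
  have hab := mul_ne_zero ha hb
  have hψa := homogeneousExpansion_ne_zero ha
  have hψb := homogeneousExpansion_ne_zero hb
  have hψ : homogeneousExpansion a * homogeneousExpansion b = Polynomial.monomial m (a * b) := by
    rw [← map_mul, homogeneousExpansion_of_isHomogeneous h]
  have hdeg := Polynomial.natDegree_mul hψa hψb
  have htrail := Polynomial.natTrailingDegree_mul hψa hψb
  rw [hψ, Polynomial.natDegree_monomial, if_neg hab] at hdeg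
  rw [hψ, Polynomial.natTrailingDegree_monomial hab] at htrail
  have hle_a := Polynomial.natTrailingDegree_le_natDegree (homogeneousExpansion a)
  have hle_b := Polynomial.natTrailingDegree_le_natDegree (homogeneousExpansion b)
  exact ⟨_, _, hdeg.symm, isHomogeneous_natDegree_homogeneousExpansion (by omega),
    isHomogeneous_natDegree_homogeneousExpansion (by omega)⟩

theorem IsHomogeneous.of_mul_left {i j : ℕ} (ha : a.IsHomogeneous i) (ha0 : a ≠ 0)
    (h : (a * b).IsHomogeneous (i + j)) : b.IsHomogeneous j := by
  rcases eq_or_ne b 0 with rfl | hb0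
  · exact isHomogeneous_zero _ _ _
  obtain ⟨i', j', hij, ha', hb⟩ := IsHomogeneous.exists_of_mul ha0 hb0 h
  obtain rfl : i' = i := ha'.inj_right ha ha0
  rwa [show j = j' by omega]

theorem IsHomogeneous.eq_zero_of_mul_left {i n : ℕ} (ha : a.IsHomogeneous i) (ha0 : a ≠ 0)
    (h : (a * b).IsHomogeneous n) (hn : n < i) : b = 0 := by
  by_contra hb0
  obtain ⟨i', j', hij, ha', -⟩ := IsHomogeneous.exists_of_mul ha0 hb0 h
  obtain rfl : i' = i := ha'.inj_right ha ha0
  omega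

end Factor

section Dimension

variable {σ K : Type*} [Field K]

instance [Finite σ] (n : ℕ) : Module.Finite K (homogeneousSubmodule σ K n) :=
  Module.Finite.iff_fg.mpr (homogeneousSubmodule_fg σ K n)

/-- Monomials of degree `n` in the variables `σ` are the multisets of size `n` on `σ`. -/
lemma finrank_homogeneousSubmodule [Fintype σ] (n : ℕ) :
    Module.finrank K (homogeneousSubmodule σ K n) = (Fintype.card σ).multichoose n := by
  classical
  let e : {d : σ →₀ ℕ | d.degree = n} ≃ Sym σ n := (Sym.equivNatSum σ n).symm
  rw [((LinearEquiv.ofEq _ _ (homogeneousSubmodule_eq_finsupp_supported σ K n)).trans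
    ((AddMonoidAlgebra.supportedEquivFinsupp _).trans (Finsupp.domLCongr e))).finrank_eq,
    Module.finrank_finsupp_self, Sym.card_sym_eq_multichoose]

lemma finrank_homogeneousSubmodule_fin_two (n : ℕ) :
    Module.finrank K (homogeneousSubmodule (Fin 2) K n) = n + 1 := by
  rw [finrank_homogeneousSubmodule, Fintype.card_fin, Nat.multichoose_two]

end Dimension

section Syzygies

variable {σ R : Type*} [CommSemiring R]

lemma homogeneousComponent_mul_of_isHomogeneous_s19 {b : MvPolynomial σ R} {i : ℕ}
    (hb : b.IsHomogeneous i) (a : MvPolynomial σ R) (n : ℕ) :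
    homogeneousComponent n (a * b) = if i ≤ n then homogeneousComponent (n - i) a * b else 0 := by
  induction a using MvPolynomial.induction_on' with
  | monomial d c =>
    have hd : (monomial d c).IsHomogeneous d.degree := isHomogeneous_monomial c rfl
    rw [homogeneousComponent_of_mem (hd.mul hb), homogeneousComponent_of_mem hd]
    split_ifs <;> first | rfl | omega
  | add p q hp hq =>
    rw [add_mul, map_add, hp, hq]
    split_ifs <;> simp [add_mul]

noncomputable def pairMul (f₁ f₂ : MvPolynomial σ R) (m : ℕ) :
    homogeneousSubmodule σ R m × homogeneousSubmodule σ R m →ₗ[R] MvPolynomial σ R :=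
  (LinearMap.mulLeft R f₁ ∘ₗ (homogeneousSubmodule σ R m).subtype).coprod
    (LinearMap.mulLeft R f₂ ∘ₗ (homogeneousSubmodule σ R m).subtype)

@[simp]
lemma pairMul_apply (f₁ f₂ : MvPolynomial σ R) (m : ℕ)
    (p : homogeneousSubmodule σ R m × homogeneousSubmodule σ R m) :
    pairMul f₁ f₂ m p = f₁ * p.1 + f₂ * p.2 :=
  rfl

noncomputable def mulHomogeneous {p : MvPolynomial σ R} {ℓ : ℕ} (hp : p.IsHomogeneous ℓ)
    (m : ℕ) : homogeneousSubmodule σ R m →ₗ[R] homogeneousSubmodule σ R (ℓ + m) :=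
  (LinearMap.mulLeft R p ∘ₗ (homogeneousSubmodule σ R m).subtype).codRestrict _
    fun c => hp.mul c.2

variable {f₁ f₂ : MvPolynomial σ R} {d : ℕ}

lemma range_pairMul (hf₁ : f₁.IsHomogeneous d) (hf₂ : f₂.IsHomogeneous d) (m : ℕ) :
    LinearMap.range (pairMul f₁ f₂ m) =
      (Ideal.span {f₁, f₂}).restrictScalars R ⊓ homogeneousSubmodule σ R (d + m) := by
  apply le_antisymm
  · rintro _ ⟨⟨a, b⟩, rfl⟩
    exact ⟨Ideal.mem_span_pair.mpr ⟨a, b, by simp [mul_comm]⟩, (hf₁.mul a.2).add (hf₂.mul b.2)⟩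
  · rintro x ⟨hxI, hx⟩
    obtain ⟨a, b, rfl⟩ := Ideal.mem_span_pair.mp hxI
    refine ⟨(⟨_, homogeneousComponent_mem m a⟩, ⟨_, homogeneousComponent_mem m b⟩), ?_⟩
    rw [pairMul_apply, ← homogeneousComponent_eq_self hx, map_add,
      homogeneousComponent_mul_of_isHomogeneous_s19 hf₁, homogeneousComponent_mul_of_isHomogeneous_s19 hf₂]
    simp [mul_comm]

lemma span_pair_inf_homogeneousSubmodule_of_lt (hf₁ : f₁.IsHomogeneous d)
    (hf₂ : f₂.IsHomogeneous d) {n : ℕ} (hn : n < d) :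
    (Ideal.span {f₁, f₂}).restrictScalars R ⊓ homogeneousSubmodule σ R n = ⊥ := by
  rw [eq_bot_iff]
  rintro x ⟨hxI, hx⟩
  obtain ⟨a, b, rfl⟩ := Ideal.mem_span_pair.mp hxI
  rw [Submodule.mem_bot, ← homogeneousComponent_eq_self hx, map_add,
    homogeneousComponent_mul_of_isHomogeneous_s19 hf₁, homogeneousComponent_mul_of_isHomogeneous_s19 hf₂,
    if_neg hn.not_ge, if_neg hn.not_ge, add_zero]

end Syzygies

section Field

variable {σ K : Type*} [Field K] {q r : MvPolynomial σ K} {ℓ : ℕ}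

noncomputable def syzygy (hq : q.IsHomogeneous ℓ) (hr : r.IsHomogeneous ℓ) (m : ℕ) :
    homogeneousSubmodule σ K m →ₗ[K]
      homogeneousSubmodule σ K (ℓ + m) × homogeneousSubmodule σ K (ℓ + m) :=
  (-mulHomogeneous hr m).prod (mulHomogeneous hq m)

lemma finrank_span_pair_inf_add_finrank_ker_pairMul [Finite σ] {f₁ f₂ : MvPolynomial σ K} {d : ℕ}
    (hf₁ : f₁.IsHomogeneous d) (hf₂ : f₂.IsHomogeneous d) (m : ℕ) :
    Module.finrank K ↥((Ideal.span {f₁, f₂}).restrictScalars K ⊓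
        homogeneousSubmodule σ K (d + m)) + Module.finrank K (LinearMap.ker (pairMul f₁ f₂ m)) =
      2 * Module.finrank K (homogeneousSubmodule σ K m) := by
  rw [← range_pairMul hf₁ hf₂, LinearMap.finrank_range_add_finrank_ker, Module.finrank_prod,
    two_mul]

lemma ker_pairMul_mul_left {g : MvPolynomial σ K} (hg : g ≠ 0) (m : ℕ) :
    LinearMap.ker (pairMul (g * q) (g * r) m) = LinearMap.ker (pairMul q r m) := by
  have : pairMul (g * q) (g * r) m = LinearMap.mulLeft K g ∘ₗ pairMul q r m :=
    LinearMap.ext fun p => by simp [mul_add, mul_assoc]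
  rw [this]
  exact LinearMap.ker_comp_of_ker_eq_bot _ (LinearMap.ker_eq_bot.mpr (mul_right_injective₀ hg))

lemma ker_pairMul_eq_bot_of_lt (hqr : IsRelPrime q r) (hq0 : q ≠ 0) (hq : q.IsHomogeneous ℓ)
    {m : ℕ} (hm : m < ℓ) : LinearMap.ker (pairMul q r m) = ⊥ := by
  rw [eq_bot_iff]
  rintro ⟨a, b⟩ hab
  obtain ⟨c, ha, hb⟩ := exists_eq_mul_of_mul_add_mul_eq_zero hqr hq0 hab
  obtain rfl : c = 0 := hq.eq_zero_of_mul_left hq0 (hb ▸ b.2) hm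
  simp only [mul_zero, neg_zero] at ha hb
  exact Prod.ext (Subtype.ext ha) (Subtype.ext hb)

lemma ker_pairMul_eq_range_syzygy (hqr : IsRelPrime q r) (hq0 : q ≠ 0)
    (hq : q.IsHomogeneous ℓ) (hr : r.IsHomogeneous ℓ) (m : ℕ) :
    LinearMap.ker (pairMul q r (ℓ + m)) = LinearMap.range (syzygy hq hr m) := by
  ext ⟨a, b⟩
  constructor
  · intro hab
    obtain ⟨c, ha, hb⟩ := exists_eq_mul_of_mul_add_mul_eq_zero hqr hq0 hab
    exact ⟨⟨c, hq.of_mul_left hq0 (hb ▸ b.2)⟩,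
      Prod.ext (Subtype.ext ha.symm) (Subtype.ext hb.symm)⟩
  · rintro ⟨c, hc⟩
    rw [LinearMap.mem_ker, ← hc]
    change q * -(r * c) + r * (q * c) = 0
    ring

lemma finrank_ker_pairMul (hqr : IsRelPrime q r) (hq0 : q ≠ 0)
    (hq : q.IsHomogeneous ℓ) (hr : r.IsHomogeneous ℓ) (m : ℕ) :
    Module.finrank K (LinearMap.ker (pairMul q r (ℓ + m))) =
      Module.finrank K (homogeneousSubmodule σ K m) := by
  have hinj : Function.Injective (syzygy hq hr m) := fun c c' h =>
    Subtype.ext (mul_left_cancel₀ hq0 (congrArg (fun p => (p.2 : MvPolynomial σ K)) h))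
  rw [ker_pairMul_eq_range_syzygy hqr hq0 hq hr, LinearMap.finrank_range_of_inj hinj]

end Field

theorem finrank_span_mul_pair_inf_homogeneousSubmodule_fin_two {K : Type*} [Field K]
    {g q r : MvPolynomial (Fin 2) K} {d ℓ : ℕ} (hg0 : g ≠ 0) (hq0 : q ≠ 0) (hqr : IsRelPrime q r)
    (hf₁ : (g * q).IsHomogeneous d) (hf₂ : (g * r).IsHomogeneous d) (hq : q.IsHomogeneous ℓ)
    (hr : r.IsHomogeneous ℓ) (n : ℕ) :
    (Module.finrank K ↥((Ideal.span {g * q, g * r}).restrictScalars K ⊓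
        homogeneousSubmodule (Fin 2) K n) : ℤ) =
      2 * max ((n : ℤ) - d + 1) 0 - max ((n : ℤ) - d - ℓ + 1) 0 := by
  rcases lt_or_ge n d with hn | hn
  · rw [span_pair_inf_homogeneousSubmodule_of_lt hf₁ hf₂ hn, finrank_bot]
    omega
  obtain ⟨m, rfl⟩ := Nat.exists_eq_add_of_le hn
  have hsum := finrank_span_pair_inf_add_finrank_ker_pairMul hf₁ hf₂ m
  rw [ker_pairMul_mul_left hg0, finrank_homogeneousSubmodule_fin_two] at hsum
  rcases lt_or_ge m ℓ with hm | hm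
  · rw [ker_pairMul_eq_bot_of_lt hqr hq0 hq hm, finrank_bot] at hsum
    omega
  obtain ⟨m', rfl⟩ := Nat.exists_eq_add_of_le hm
  rw [finrank_ker_pairMul hqr hq0 hq hr, finrank_homogeneousSubmodule_fin_two] at hsum
  omega

end MvPolynomial

theorem hilbert_function_two_variable_psi_general {k : Type*} [Field k] {kdeg ℓ : ℕ}
    (f : MvPolynomial (Fin 2) k) (hf0 : f ≠ 0) (hfhom : f.IsHomogeneous kdeg)
    (g : MvPolynomial (Fin 2) k)
    (hgσ : g ∣ rename (Equiv.swap 0 1) f)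
    (hgcd : ∀ h : MvPolynomial (Fin 2) k, h ∣ f → h ∣ rename (Equiv.swap 0 1) f → h ∣ g)
    (q : MvPolynomial (Fin 2) k) (hq : f = g * q) (hq0 : q ≠ 0)
    (hqhom : q.IsHomogeneous ℓ)
    (I : Ideal (MvPolynomial (Fin 2) k))
    (hI : I = Ideal.span {f, rename (Equiv.swap 0 1) f}) :
    ∀ n : ℕ,
      (Module.finrank k
          ↥(Submodule.restrictScalars k I ⊓ homogeneousSubmodule (Fin 2) k n) : ℤ) =
        2 * max ((n : ℤ) - kdeg + 1) 0 - max ((n : ℤ) - kdeg - ℓ + 1) 0 := by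
  obtain ⟨r, hr⟩ := hgσ
  have hσfhom : (rename (Equiv.swap 0 1) f).IsHomogeneous kdeg := hfhom.rename_isHomogeneous
  have hg0 : g ≠ 0 := left_ne_zero_of_mul (hq ▸ hf0)
  obtain ⟨e, j, rfl, hg, hqj⟩ := IsHomogeneous.exists_of_mul hg0 hq0 (hq ▸ hfhom)
  obtain rfl : ℓ = j := hqhom.inj_right hqj hq0
  have hrhom : r.IsHomogeneous ℓ := hg.of_mul_left hg0 (hr ▸ hσfhom)
  have hqr : IsRelPrime q r := isRelPrime_of_forall_dvd_mul_dvd hg0 (hq ▸ hr ▸ hgcd)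
  rw [hI, hr, hq]
  exact finrank_span_mul_pair_inf_homogeneousSubmodule_fin_two hg0 hq0 hqr (hq ▸ hfhom)
    (hr ▸ hσfhom) hqhom hrhom

theorem hilbert_function_two_variable_psi {k : Type*} [Field k] {kdeg ℓ : ℕ}
    (f : MvPolynomial (Fin 2) k) (hf0 : f ≠ 0) (hfhom : f.IsHomogeneous kdeg)
    (g : MvPolynomial (Fin 2) k)
    (hgf : g ∣ f) (hgσ : g ∣ rename (Equiv.swap 0 1) f)
    (hgcd : ∀ h : MvPolynomial (Fin 2) k, h ∣ f → h ∣ rename (Equiv.swap 0 1) f → h ∣ g)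
    (q : MvPolynomial (Fin 2) k) (hq : f = g * q) (hq0 : q ≠ 0)
    (hqhom : q.IsHomogeneous ℓ)
    (I : Ideal (MvPolynomial (Fin 2) k))
    (hI : I = Ideal.span {f, rename (Equiv.swap 0 1) f}) :
    ∀ n : ℕ,
      (Module.finrank k
          ↥(Submodule.restrictScalars k I ⊓ homogeneousSubmodule (Fin 2) k n) : ℤ) =
        2 * max ((n : ℤ) - kdeg + 1) 0 - max ((n : ℤ) - kdeg - ℓ + 1) 0 :=
  hilbert_function_two_variable_psi_general f hf0 hfhom g hgσ hgcd q hq hq0 hqhom I hI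
end
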